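/- Let a, b be nonzero real numbers and let n₄(a,b,a,b) be the Lie algebra structure on ℝ⁷ with nonzero brackets [e₁,e₂] = −a e₃, [e₁,e₃] = −b e₆, [e₂,e₄] = −a e₆, [e₁,e₅] = −b e₇. Let D be the endomorphism with De₁ = −b² e₁ − ab e₅, De₂ = −2b² e₂, De₃ = −3b² e₃, De₄ = −2b² e₄ − ab e₇, De₅ = −3b² e₅, De₆ = −4b² e₆, De₇ = −4b² e₇. Then the transpose Dᵗ (with respect to the standard inner product on ℝ⁷, so Dᵗe₅ = −ab e₁ − 3b² e₅ and Dᵗe₇ = −ab e₄ − 4b² e₇, diagonal otherwise as D) is NOT a derivation of n₄(a,b,a,b); indeed [Dᵗe₂, e₇] + [e₂, Dᵗe₇] = a²b e₆ ≠ 0 = Dᵗ[e₂,e₇]. -/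

import Mathlib

noncomputable section

/-- `ℝ⁷` with its standard basis. -/
abbrev V7 := Fin 7 → ℝ

/-- The `i`-th standard basis vector of `ℝ⁷`. -/
def std (i : Fin 7) : V7 := fun m => if m = i then 1 else 0

/-- The Lie bracket of `n₄(a,b,a,b)`: `[e₁,e₂] = −a e₃`, `[e₁,e₃] = −b e₆`,
`[e₂,e₄] = −a e₆`, `[e₁,e₅] = −b e₇`. -/
def br4 (a b : ℝ) (X Y : V7) : V7 :=
  ![0, 0, -a * (X 0 * Y 1 - X 1 * Y 0), 0, 0,
    -b * (X 0 * Y 2 - X 2 * Y 0) - a * (X 1 * Y 3 - X 3 * Y 1),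
    -b * (X 0 * Y 4 - X 4 * Y 0)]

/-- The transpose `Dᵗ` (w.r.t. the standard inner product) of the soliton derivation `D`:
`Dᵗe₁ = −b²e₁`, `Dᵗe₂ = −2b²e₂`, `Dᵗe₃ = −3b²e₃`, `Dᵗe₄ = −2b²e₄`,
`Dᵗe₅ = −ab e₁ − 3b²e₅`, `Dᵗe₆ = −4b²e₆`, `Dᵗe₇ = −ab e₄ − 4b²e₇`. -/
def D4t (a b : ℝ) (X : V7) : V7 :=
  ![-b ^ 2 * X 0 - a * b * X 4, -2 * b ^ 2 * X 1, -3 * b ^ 2 * X 2,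
    -2 * b ^ 2 * X 3 - a * b * X 6, -3 * b ^ 2 * X 4, -4 * b ^ 2 * X 5,
    -4 * b ^ 2 * X 6]

/-! `Dᵗe₂` is a multiple of `e₂` and `[e₂, e₇] = 0`, so the Leibniz rule on `(e₂, e₇)` reduces to
`[e₂, Dᵗe₇] = 0`. But `Dᵗe₇` has the component `−ab e₄` coming from the off-diagonal entry of `D`,
and `[e₂, e₄] = −a e₆ ≠ 0`. Indices are shifted in the code: `std i` is `e_{i+1}`. -/

theorem std_ne_zero (i : Fin 7) : std i ≠ 0 := by
  have h : std i = Pi.single i 1 := by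
    ext m
    simp [std, Pi.single_apply]
  rw [h]
  exact Pi.single_ne_zero_iff.mpr one_ne_zero

section

variable (a b : ℝ)

theorem br4_smul_left (c : ℝ) (X Y : V7) : br4 a b (c • X) Y = c • br4 a b X Y := by
  ext m; fin_cases m <;> simp [br4] <;> ring

theorem br4_smul_right (c : ℝ) (X Y : V7) : br4 a b X (c • Y) = c • br4 a b X Y := by
  ext m; fin_cases m <;> simp [br4] <;> ring

theorem br4_add_right (X Y Z : V7) : br4 a b X (Y + Z) = br4 a b X Y + br4 a b X Z := by
  ext m; fin_cases m <;> simp [br4] <;> ring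

theorem br4_std_one_std_three : br4 a b (std 1) (std 3) = (-a) • std 5 := by
  ext m; fin_cases m <;> simp [br4, std]

theorem br4_std_one_std_six : br4 a b (std 1) (std 6) = 0 := by
  ext m; fin_cases m <;> simp [br4, std]

theorem D4t_zero : D4t a b 0 = 0 := by
  ext m; fin_cases m <;> simp [D4t]

theorem D4t_std_one : D4t a b (std 1) = (-2 * b ^ 2) • std 1 := by
  ext m; fin_cases m <;> simp [D4t, std]

theorem D4t_std_six : D4t a b (std 6) = (-(a * b)) • std 3 + (-4 * b ^ 2) • std 6 := by
  ext m; fin_cases m <;> simp [D4t, std]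

theorem br4_D4t_std_one_std_six_add :
    br4 a b (D4t a b (std 1)) (std 6) + br4 a b (std 1) (D4t a b (std 6)) =
      (a ^ 2 * b) • std 5 := by
  rw [D4t_std_one, D4t_std_six, br4_smul_left, br4_add_right, br4_smul_right, br4_smul_right,
    br4_std_one_std_three, br4_std_one_std_six, smul_smul]
  simp only [smul_zero, zero_add, add_zero]
  ring_nf

theorem D4t_br4_std_one_std_six : D4t a b (br4 a b (std 1) (std 6)) = 0 := by
  rw [br4_std_one_std_six, D4t_zero]

end

/-- `Dᵗ` is NOT a derivation of `n₄(a,b,a,b)`; indeed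
`[Dᵗe₂, e₇] + [e₂, Dᵗe₇] = a²b e₆ ≠ 0 = Dᵗ[e₂,e₇]`. -/
theorem n4_transpose_not_derivation (a b : ℝ) (ha : a ≠ 0) (hb : b ≠ 0) :
    (¬ ∀ X Y : V7,
        D4t a b (br4 a b X Y) = br4 a b (D4t a b X) Y + br4 a b X (D4t a b Y)) ∧
      br4 a b (D4t a b (std 1)) (std 6) + br4 a b (std 1) (D4t a b (std 6)) =
        (a ^ 2 * b) • std 5 ∧
      (a ^ 2 * b) • std 5 ≠ 0 ∧
      D4t a b (br4 a b (std 1) (std 6)) = 0 := by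
  have hne : (a ^ 2 * b) • std 5 ≠ 0 :=
    smul_ne_zero (mul_ne_zero (pow_ne_zero 2 ha) hb) (std_ne_zero 5)
  refine ⟨fun hder => hne ?_, br4_D4t_std_one_std_six_add a b, hne, D4t_br4_std_one_std_six a b⟩
  rw [← br4_D4t_std_one_std_six_add, ← hder, D4t_br4_std_one_std_six]
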